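/- (Analytic form of Theorem 3.6.) Let Φ be a subcritical branching mechanism (α > 0) whose Lévy measure π has unbounded support, i.e. π((r,∞)) > 0 for every r > 0. For r > 0 let (Φ^{(r,∞)})^{−1}(a) denote the unique b ≥ 0 with Φ^{(r,∞)}(b) = a (note Φ^{(r,∞)} is a strictly increasing bijection of [0,∞) onto [0,∞) since its drift α + ∫_{(r,∞)} θ π(dθ) is positive). Then for every x > 0, lim_{r→∞} (1 − exp(−x · (Φ^{(r,∞)})^{−1}(π((r,∞))))) / π((r,∞)) = x/α. Equivalently, lim_{r→∞} (Φ^{(r,∞)})^{−1}(π((r,∞)))/π((r,∞)) = 1/α. -/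

import Mathlib

open MeasureTheory Filter Set

/-- The branching mechanism `Φ(λ) = αλ + βλ² + ∫_{(0,∞)} (e^{-λθ} - 1 + λθ) π(dθ)`. -/
noncomputable def Phi (α β : ℝ) (π : Measure ℝ) (lam : ℝ) : ℝ :=
  α * lam + β * lam ^ 2 + ∫ θ, (Real.exp (-lam * θ) - 1 + lam * θ) ∂π

/-- The `(r,∞)`-truncated branching mechanism
`Φ^{(r,∞)}(λ) = Φ(λ) + ∫_{(r,∞)} (1 - e^{-λθ}) π(dθ)`. -/
noncomputable def PhiIoi (α β : ℝ) (π : Measure ℝ) (r lam : ℝ) : ℝ :=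
  Phi α β π lam + ∫ θ in Set.Ioi r, (1 - Real.exp (-lam * θ)) ∂π

/-! Put `p = π((r,∞))` and `b = (Φ^{(r,∞)})⁻¹(p)`. Every term of `Φ^{(r,∞)}(λ)` besides `αλ` is
nonnegative, so `αb ≤ p` and `b → 0`. Conversely `e^{-u} - 1 + u ≤ u min(1, u)` and `1 - e^{-u} ≤ u`
give, for `r ≥ 1`, `Φ^{(r,∞)}(λ) ≤ (α + βλ + ∫ θ ∧ λθ² dπ + ∫_{(r,∞)} θ ∧ θ² dπ) λ`, and along
`λ = b` the bracket tends to `α` by dominated convergence. Hence `b/p → 1/α`, and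
`1 - e^{-xb} = xb + O(b²)` turns this into the limit for the tail of the maximal jump. -/

open scoped Topology

lemma exp_neg_sub_one_add_nonneg (u : ℝ) : 0 ≤ Real.exp (-u) - 1 + u := by
  linarith [Real.one_sub_le_exp_neg u]

lemma exp_neg_sub_one_add_le_self {u : ℝ} (hu : 0 ≤ u) : Real.exp (-u) - 1 + u ≤ u := by
  linarith [Real.exp_le_one_iff.2 (neg_nonpos.2 hu)]

lemma exp_neg_sub_one_add_le_sq {u : ℝ} (hu : 0 ≤ u) : Real.exp (-u) - 1 + u ≤ u ^ 2 := by
  have hinv : Real.exp (-u) * Real.exp u = 1 := by rw [← Real.exp_add, neg_add_cancel, Real.exp_zero]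
  nlinarith [Real.add_one_le_exp u, Real.exp_pos (-u), mul_nonneg hu (sq_nonneg u)]

lemma exp_neg_sub_one_add_monotoneOn :
    MonotoneOn (fun u : ℝ => Real.exp (-u) - 1 + u) (Ici 0) := by
  intro u hu v _ huv
  have hsplit : Real.exp (-v) = Real.exp (-u) * Real.exp (-(v - u)) := by
    rw [← Real.exp_add]; ring_nf
  have hu1 : Real.exp (-u) ≤ 1 := Real.exp_le_one_iff.2 (neg_nonpos.2 hu)
  nlinarith [Real.one_sub_le_exp_neg (v - u), Real.exp_pos (-u)]

lemma exp_neg_mul_sub_one_add_le {lam θ : ℝ} (hlam : 0 ≤ lam) (hθ : 0 ≤ θ) :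
    Real.exp (-lam * θ) - 1 + lam * θ ≤ lam * min θ (lam * θ ^ 2) := by
  have hu : 0 ≤ lam * θ := mul_nonneg hlam hθ
  rw [mul_min_of_nonneg _ _ hlam, neg_mul]
  exact le_min (exp_neg_sub_one_add_le_self hu)
    ((exp_neg_sub_one_add_le_sq hu).trans_eq (by ring))

lemma min_mul_le_max_mul_min {a b x y : ℝ} (ha : 0 ≤ a) (hx : 0 ≤ x) (hy : 0 ≤ y) :
    min (a * x) (b * y) ≤ max a b * min x y := by
  rw [mul_min_of_nonneg _ _ (ha.trans (le_max_left a b))]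
  exact min_le_min (mul_le_mul_of_nonneg_right (le_max_left a b) hx)
    (mul_le_mul_of_nonneg_right (le_max_right a b) hy)

lemma tendsto_div_of_mul_le_of_le_add_mul {ι : Type*} {l : Filter ι} {α : ℝ} (hα : 0 < α)
    {b p ε : ι → ℝ} (hε : Tendsto ε l (𝓝 0)) (hp : ∀ᶠ i in l, 0 < p i)
    (hlow : ∀ᶠ i in l, α * b i ≤ p i) (hup : ∀ᶠ i in l, p i ≤ (α + ε i) * b i) :
    Tendsto (fun i => b i / p i) l (𝓝 (1 / α)) := by
  have hαε : Tendsto (fun i => 1 / (α + ε i)) l (𝓝 (1 / α)) := by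
    simpa using ((tendsto_const_nhds (x := α)).add hε).inv₀ (by simpa using hα.ne')
  refine tendsto_of_tendsto_of_tendsto_of_le_of_le' hαε tendsto_const_nhds ?_ ?_
  · filter_upwards [hp, hup, hε.eventually (lt_mem_nhds (neg_lt_zero.2 hα))]
      with i hpi hupi hεi
    rw [div_le_div_iff₀ (by linarith) hpi]
    linarith
  · filter_upwards [hp, hlow] with i hpi hlowi
    rw [div_le_div_iff₀ hpi hα]
    linarith

lemma tendsto_one_sub_exp_neg_mul_div {ι : Type*} {l : Filter ι} {b p : ι → ℝ} {c x : ℝ}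
    (hx : 0 ≤ x) (hb : Tendsto b l (𝓝 0)) (hb_nonneg : ∀ᶠ i in l, 0 ≤ b i)
    (hp : ∀ᶠ i in l, 0 ≤ p i) (hbp : Tendsto (fun i => b i / p i) l (𝓝 c)) :
    Tendsto (fun i => (1 - Real.exp (-x * b i)) / p i) l (𝓝 (x * c)) := by
  have hlow : Tendsto (fun i => x * (b i / p i) - x ^ 2 * b i * (b i / p i)) l (𝓝 (x * c)) := by
    simpa using (hbp.const_mul x).sub ((hb.const_mul (x ^ 2)).mul hbp)
  refine tendsto_of_tendsto_of_tendsto_of_le_of_le' hlow (hbp.const_mul x) ?_ ?_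
  · filter_upwards [hb_nonneg, hp] with i hbi hpi
    have hquad := exp_neg_sub_one_add_le_sq (mul_nonneg hx hbi)
    rw [neg_mul]
    calc x * (b i / p i) - x ^ 2 * b i * (b i / p i) = (x * b i - (x * b i) ^ 2) / p i := by ring
      _ ≤ (1 - Real.exp (-(x * b i))) / p i := div_le_div_of_nonneg_right (by linarith) hpi
  · filter_upwards [hp] with i hpi
    rw [mul_div_assoc', neg_mul]
    gcongr
    linarith [Real.one_sub_le_exp_neg (x * b i)]

lemma iInter_Ioi_eq_empty {α : Type*} [Preorder α] : ⋂ a : α, Ioi a = ∅ :=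
  iInter_eq_empty_iff.2 fun a => ⟨a, lt_irrefl a⟩

lemma tendsto_setIntegral_Ioi_atTop_zero {μ : Measure ℝ} {f : ℝ → ℝ} (hf : Integrable f μ) :
    Tendsto (fun r => ∫ θ in Ioi r, f θ ∂μ) atTop (𝓝 0) := by
  simpa [iInter_Ioi_eq_empty] using tendsto_setIntegral_of_antitone (fun r => measurableSet_Ioi)
    (fun r s hrs => Ioi_subset_Ioi hrs) ⟨0, hf.integrableOn⟩

section LevyMeasure

variable {π : Measure ℝ}

lemma ae_pos_of_measure_Iic_eq_zero (hsupp : π (Iic 0) = 0) : ∀ᵐ θ ∂π, 0 < θ := by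
  simpa using measure_eq_zero_iff_ae_notMem.1 hsupp

lemma measure_Ioi_lt_top (hint : Integrable (fun θ => min θ (θ ^ 2)) π) {r : ℝ} (hr : 0 < r) :
    π (Ioi r) < ⊤ := by
  refine (measure_mono fun θ (hθ : r < θ) => ?_).trans_lt
    (hint.measure_ge_lt_top (ε := min r (r ^ 2)) (by positivity))
  exact min_le_min hθ.le (by nlinarith)

lemma tendsto_measure_Ioi_toReal_atTop (hint : Integrable (fun θ => min θ (θ ^ 2)) π) :
    Tendsto (fun r => (π (Ioi r)).toReal) atTop (𝓝 0) := by
  have h := tendsto_measure_iInter_atTop (μ := π) (fun r => measurableSet_Ioi.nullMeasurableSet)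
    (fun r s hrs => Ioi_subset_Ioi hrs) ⟨1, (measure_Ioi_lt_top hint one_pos).ne⟩
  rw [iInter_Ioi_eq_empty, measure_empty] at h
  exact (ENNReal.tendsto_toReal ENNReal.zero_ne_top).comp h

lemma integrable_min_mul_sq (hsupp : π (Iic 0) = 0)
    (hint : Integrable (fun θ => min θ (θ ^ 2)) π) {lam : ℝ} (hlam : 0 ≤ lam) :
    Integrable (fun θ => min θ (lam * θ ^ 2)) π := by
  refine (hint.const_mul (max 1 lam)).mono' (by fun_prop) ?_
  filter_upwards [ae_pos_of_measure_Iic_eq_zero hsupp] with θ hθ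
  rw [Real.norm_eq_abs, abs_of_nonneg (le_min hθ.le (by positivity))]
  simpa using min_mul_le_max_mul_min zero_le_one hθ.le (sq_nonneg θ) (b := lam)

lemma integrable_exp_neg_mul_sub_one_add (hsupp : π (Iic 0) = 0)
    (hint : Integrable (fun θ => min θ (θ ^ 2)) π) {lam : ℝ} (hlam : 0 ≤ lam) :
    Integrable (fun θ => Real.exp (-lam * θ) - 1 + lam * θ) π := by
  refine ((integrable_min_mul_sq hsupp hint hlam).const_mul lam).mono' (by fun_prop) ?_
  filter_upwards [ae_pos_of_measure_Iic_eq_zero hsupp] with θ hθ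
  rw [Real.norm_eq_abs, abs_of_nonneg (by simpa [neg_mul] using exp_neg_sub_one_add_nonneg (lam * θ))]
  exact exp_neg_mul_sub_one_add_le hlam hθ.le

lemma integrableOn_one_sub_exp_neg_mul (hint : Integrable (fun θ => min θ (θ ^ 2)) π)
    {r lam : ℝ} (hr : 0 < r) (hlam : 0 ≤ lam) :
    IntegrableOn (fun θ => 1 - Real.exp (-lam * θ)) (Ioi r) π := by
  refine (integrableOn_const (measure_Ioi_lt_top hint hr).ne (C := (1 : ℝ))).mono' (by fun_prop) ?_
  filter_upwards [ae_restrict_mem measurableSet_Ioi] with θ (hθ : r < θ)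
  have hexp : Real.exp (-lam * θ) ≤ 1 := Real.exp_le_one_iff.2 (by nlinarith)
  rw [Real.norm_eq_abs, abs_of_nonneg (by linarith)]
  linarith [Real.exp_pos (-lam * θ)]

lemma tendsto_integral_min_mul_sq (hsupp : π (Iic 0) = 0)
    (hint : Integrable (fun θ => min θ (θ ^ 2)) π) :
    Tendsto (fun lam => ∫ θ, min θ (lam * θ ^ 2) ∂π) (𝓝[≥] 0) (𝓝 0) := by
  have hpos := ae_pos_of_measure_Iic_eq_zero hsupp
  have h := tendsto_integral_filter_of_dominated_convergence (fun θ => min θ (θ ^ 2))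
    (Eventually.of_forall fun lam => by fun_prop) ?_ hint ?_ (μ := π) (l := 𝓝[≥] (0 : ℝ))
    (F := fun lam θ => min θ (lam * θ ^ 2)) (f := fun _ => 0)
  · simpa using h
  · filter_upwards [inter_mem_nhdsWithin (Ici 0) (Iio_mem_nhds one_pos)]
      with lam ⟨(hlam0 : 0 ≤ lam), (hlam1 : lam < 1)⟩
    filter_upwards [hpos] with θ hθ
    rw [Real.norm_eq_abs, abs_of_nonneg (le_min hθ.le (by positivity))]
    exact min_le_min le_rfl (by nlinarith [sq_nonneg θ])
  · filter_upwards [hpos] with θ hθ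
    have hcont : Tendsto (fun lam : ℝ => min θ (lam * θ ^ 2)) (𝓝 0) (𝓝 (min θ (0 * θ ^ 2))) :=
      (by fun_prop : Continuous fun lam : ℝ => min θ (lam * θ ^ 2)).tendsto 0
    rw [zero_mul, min_eq_right hθ.le] at hcont
    exact hcont.mono_left nhdsWithin_le_nhds

end LevyMeasure

section PhiIoi

variable {α β : ℝ} {π : Measure ℝ}

lemma monotoneOn_integral_exp_neg_mul_sub_one_add (hsupp : π (Iic 0) = 0)
    (hint : Integrable (fun θ => min θ (θ ^ 2)) π) :
    MonotoneOn (fun lam => ∫ θ, (Real.exp (-lam * θ) - 1 + lam * θ) ∂π) (Ici 0) := by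
  intro a (ha : 0 ≤ a) c (hc : 0 ≤ c) hac
  refine integral_mono_of_nonneg ?_ (integrable_exp_neg_mul_sub_one_add hsupp hint hc) ?_
  · exact Eventually.of_forall fun θ => by simpa [neg_mul] using exp_neg_sub_one_add_nonneg (a * θ)
  · filter_upwards [ae_pos_of_measure_Iic_eq_zero hsupp] with θ hθ
    simpa [neg_mul] using exp_neg_sub_one_add_monotoneOn (mem_Ici.2 (mul_nonneg ha hθ.le))
      (mem_Ici.2 (mul_nonneg hc hθ.le)) (mul_le_mul_of_nonneg_right hac hθ.le)

lemma monotoneOn_setIntegral_one_sub_exp_neg_mul (hint : Integrable (fun θ => min θ (θ ^ 2)) π)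
    {r : ℝ} (hr : 0 < r) :
    MonotoneOn (fun lam => ∫ θ in Ioi r, (1 - Real.exp (-lam * θ)) ∂π) (Ici 0) := by
  intro a (ha : 0 ≤ a) c (hc : 0 ≤ c) hac
  refine setIntegral_mono_on (integrableOn_one_sub_exp_neg_mul hint hr ha)
    (integrableOn_one_sub_exp_neg_mul hint hr hc) measurableSet_Ioi fun θ (hθ : r < θ) => ?_
  have hexp : Real.exp (-c * θ) ≤ Real.exp (-a * θ) :=
    Real.exp_le_exp.2 (by nlinarith)
  linarith

lemma mul_le_PhiIoi (hβ : 0 ≤ β) (hsupp : π (Iic 0) = 0) (r : ℝ) {lam : ℝ} (hlam : 0 ≤ lam) :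
    α * lam ≤ PhiIoi α β π r lam := by
  have hpos := ae_pos_of_measure_Iic_eq_zero hsupp
  have hmain : 0 ≤ ∫ θ, (Real.exp (-lam * θ) - 1 + lam * θ) ∂π :=
    integral_nonneg fun θ => by simpa [neg_mul] using exp_neg_sub_one_add_nonneg (lam * θ)
  have htail : 0 ≤ ∫ θ in Ioi r, (1 - Real.exp (-lam * θ)) ∂π := by
    refine integral_nonneg_of_ae ((ae_restrict_of_ae hpos).mono fun θ hθ => ?_)
    simpa using Real.exp_le_one_iff.2 (by nlinarith : -lam * θ ≤ 0)
  have hquad : 0 ≤ β * lam ^ 2 := by positivity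
  simp only [PhiIoi, Phi]
  linarith

lemma PhiIoi_le_mul (hsupp : π (Iic 0) = 0) (hint : Integrable (fun θ => min θ (θ ^ 2)) π)
    {r lam : ℝ} (hr : 1 ≤ r) (hlam : 0 ≤ lam) :
    PhiIoi α β π r lam ≤ (α + β * lam + ∫ θ, min θ (lam * θ ^ 2) ∂π
      + ∫ θ in Ioi r, min θ (θ ^ 2) ∂π) * lam := by
  have hmain : ∫ θ, (Real.exp (-lam * θ) - 1 + lam * θ) ∂π
      ≤ lam * ∫ θ, min θ (lam * θ ^ 2) ∂π := by
    rw [← integral_const_mul]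
    refine integral_mono_of_nonneg ?_ ((integrable_min_mul_sq hsupp hint hlam).const_mul lam) ?_
    · exact Eventually.of_forall fun θ => by simpa [neg_mul] using exp_neg_sub_one_add_nonneg (lam * θ)
    · filter_upwards [ae_pos_of_measure_Iic_eq_zero hsupp] with θ hθ
      exact exp_neg_mul_sub_one_add_le hlam hθ.le
  have htail : ∫ θ in Ioi r, (1 - Real.exp (-lam * θ)) ∂π
      ≤ lam * ∫ θ in Ioi r, min θ (θ ^ 2) ∂π := by
    rw [← integral_const_mul]
    refine setIntegral_mono_of_nonneg (fun θ (hθ : r < θ) => ?_) (fun θ (hθ : r < θ) => ?_)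
      (hint.integrableOn.const_mul lam)
    · simpa using Real.exp_le_one_iff.2 (by nlinarith : -lam * θ ≤ 0)
    · rw [min_eq_left (by nlinarith), neg_mul]
      linarith [Real.one_sub_le_exp_neg (lam * θ)]
  simp only [PhiIoi, Phi]
  nlinarith

lemma PhiIoi_strictMonoOn (hα : 0 < α) (hβ : 0 ≤ β) (hsupp : π (Iic 0) = 0)
    (hint : Integrable (fun θ => min θ (θ ^ 2)) π) {r : ℝ} (hr : 0 < r) :
    StrictMonoOn (PhiIoi α β π r) (Ici 0) := by
  have hlin : StrictMonoOn (fun lam : ℝ => α * lam) (Ici 0) :=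
    (strictMono_mul_left_of_pos hα).strictMonoOn _
  have hquad : MonotoneOn (fun lam : ℝ => β * lam ^ 2) (Ici 0) := fun a ha c _ hac =>
    mul_le_mul_of_nonneg_left (pow_le_pow_left₀ ha hac 2) hβ
  exact (hlin.add_monotone hquad).add_monotone
    (monotoneOn_integral_exp_neg_mul_sub_one_add hsupp hint) |>.add_monotone
    (monotoneOn_setIntegral_one_sub_exp_neg_mul hint hr)

end PhiIoi

theorem global_maximal_jump_tail_asymptotics_general
    (α β : ℝ) (hα : 0 < α) (hβ : 0 ≤ β) (π : Measure ℝ)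
    (hsupp : π (Set.Iic 0) = 0)
    (hint : Integrable (fun θ => min θ (θ ^ 2)) π)
    (hunbdd : ∀ r : ℝ, 0 < r → 0 < (π (Set.Ioi r)).toReal)
    (inv : ℝ → ℝ → ℝ)
    (hinv : ∀ r : ℝ, 0 < r → ∀ a : ℝ, 0 ≤ a →
      0 ≤ inv r a ∧ PhiIoi α β π r (inv r a) = a) :
    (∀ r : ℝ, 0 < r → StrictMonoOn (PhiIoi α β π r) (Set.Ici 0)) ∧
    (∀ x : ℝ, 0 < x →
      Tendsto
        (fun r => (1 - Real.exp (-x * inv r ((π (Set.Ioi r)).toReal))) /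
          (π (Set.Ioi r)).toReal)
        atTop (nhds (x / α))) ∧
    Tendsto
      (fun r => inv r ((π (Set.Ioi r)).toReal) / (π (Set.Ioi r)).toReal)
      atTop (nhds (1 / α)) := by
  set p : ℝ → ℝ := fun r => (π (Ioi r)).toReal
  set b : ℝ → ℝ := fun r => inv r (p r)
  have hb : ∀ᶠ r in atTop, 0 ≤ b r ∧ PhiIoi α β π r (b r) = p r := by
    filter_upwards [eventually_gt_atTop 0] with r hr using hinv r hr (p r) ENNReal.toReal_nonneg
  have hlow : ∀ᶠ r in atTop, α * b r ≤ p r := by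
    filter_upwards [hb] with r ⟨hbr, hbΦ⟩ using hbΦ ▸ mul_le_PhiIoi hβ hsupp r hbr
  have hb_lim : Tendsto b atTop (𝓝[≥] 0) := by
    refine tendsto_nhdsWithin_iff.2 ⟨?_, hb.mono fun r h => h.1⟩
    refine tendsto_of_tendsto_of_tendsto_of_le_of_le' tendsto_const_nhds
      (by simpa using (tendsto_measure_Ioi_toReal_atTop hint).div_const α)
      (hb.mono fun r h => h.1) (hlow.mono fun r h => ?_)
    rw [le_div_iff₀ hα]
    linarith
  have hε : Tendsto (fun r => β * b r + ∫ θ, min θ (b r * θ ^ 2) ∂π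
      + ∫ θ in Ioi r, min θ (θ ^ 2) ∂π) atTop (𝓝 0) := by
    simpa using (((tendsto_nhdsWithin_iff.1 hb_lim).1.const_mul β).add
      ((tendsto_integral_min_mul_sq hsupp hint).comp hb_lim)).add
      (tendsto_setIntegral_Ioi_atTop_zero hint)
  have hup : ∀ᶠ r in atTop, p r ≤ (α + (β * b r + ∫ θ, min θ (b r * θ ^ 2) ∂π
      + ∫ θ in Ioi r, min θ (θ ^ 2) ∂π)) * b r := by
    filter_upwards [hb, eventually_ge_atTop 1] with r ⟨hbr, hbΦ⟩ hr
    exact hbΦ ▸ (PhiIoi_le_mul hsupp hint hr hbr).trans_eq (by ring)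
  have hbp : Tendsto (fun r => b r / p r) atTop (𝓝 (1 / α)) :=
    tendsto_div_of_mul_le_of_le_add_mul hα hε
      (eventually_gt_atTop 0 |>.mono hunbdd) hlow hup
  refine ⟨fun r hr => PhiIoi_strictMonoOn hα hβ hsupp hint hr, fun x hx => ?_, hbp⟩
  simpa [div_eq_mul_one_div x α] using tendsto_one_sub_exp_neg_mul_div hx.le
    (tendsto_nhdsWithin_iff.1 hb_lim).1 (hb.mono fun r h => h.1)
    (Eventually.of_forall fun r => ENNReal.toReal_nonneg) hbp

/-- Analytic form of Theorem 3.6: in the subcritical case the tail of the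
global maximal jump is asymptotically `(x/α) π((r,∞))` as `r → ∞`. -/
theorem global_maximal_jump_tail_asymptotics
    (α β : ℝ) (hα : 0 < α) (hβ : 0 ≤ β) (π : Measure ℝ)
    (hsupp : π (Set.Iic 0) = 0) (hσ : SigmaFinite π)
    (hint : Integrable (fun θ => min θ (θ ^ 2)) π)
    (hunbdd : ∀ r : ℝ, 0 < r → 0 < (π (Set.Ioi r)).toReal)
    (inv : ℝ → ℝ → ℝ)
    (hinv : ∀ r : ℝ, 0 < r → ∀ a : ℝ, 0 ≤ a →
      0 ≤ inv r a ∧ PhiIoi α β π r (inv r a) = a) :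
    (∀ r : ℝ, 0 < r → StrictMonoOn (PhiIoi α β π r) (Set.Ici 0)) ∧
    (∀ x : ℝ, 0 < x →
      Tendsto
        (fun r => (1 - Real.exp (-x * inv r ((π (Set.Ioi r)).toReal))) /
          (π (Set.Ioi r)).toReal)
        atTop (nhds (x / α))) ∧
    Tendsto
      (fun r => inv r ((π (Set.Ioi r)).toReal) / (π (Set.Ioi r)).toReal)
      atTop (nhds (1 / α)) :=
  global_maximal_jump_tail_asymptotics_general α β hα hβ π hsupp hint hunbdd inv hinv
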